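/- For n ≥ 6, every edge-coloured graph on n vertices with all colour classes of size at most 2 and no rainbow triangle has at most ⌊n/2⌋⌈n/2⌉ + ⌊⌈n/2⌉/2⌋ edges. -/

import Mathlib

/-!
If a triangle is not rainbow, two of its edges share a colour; since colour classes have at most
two edges, that class consists of exactly these two edges, and they span the triangle. So distinct
triangles have distinct repeated colours. Globally, this bounds the number of triangles by the
number of two-edge colour classes, which is at most `m / 2`. At a vertex `x` the repeated colour is
the colour of an edge at `x`, so at most `deg x` triangles contain `x`.

Together with `deg u + deg v ≤ codeg(u, v) + n`, the local bound shows that minimum degree `r`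
forces every degree to be at most `n + 2 - r`. For `r ≥ 4` equality at `x` forces `N(x)ᶜ` to be
complete to `N(x)` and `N(x)` to be 2-regular, which gives too many triangles for the global bound.
The theorem follows by induction from `n = 6`, which comes from the global bound and
`7 deg ≤ deg² + 12`: either delete a vertex of degree at most `⌊n/2⌋`, or all degrees are at most
`⌈n/2⌉` and `2m ≤ n⌈n/2⌉`.
-/

open Finset

def rainbowTriangleBound (n : ℕ) : ℕ := n / 2 * ((n + 1) / 2) + (n + 1) / 2 / 2

lemma rainbowTriangleBound_add_le (n : ℕ) :
    rainbowTriangleBound n + (n + 1) / 2 ≤ rainbowTriangleBound (n + 1) := by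
  unfold rainbowTriangleBound
  rcases Nat.even_or_odd' n with ⟨k, rfl | rfl⟩
  · rw [show (2 * k) / 2 = k by omega, show (2 * k + 1) / 2 = k by omega,
      show (2 * k + 1 + 1) / 2 = k + 1 by omega]
    have := Nat.div_le_div_right (c := 2) (Nat.le_succ k)
    nlinarith
  · rw [show (2 * k + 1) / 2 = k by omega, show (2 * k + 1 + 1) / 2 = k + 1 by omega,
      show (2 * k + 1 + 1 + 1) / 2 = k + 1 by omega]
    ring_nf; omega

lemma le_rainbowTriangleBound_of_two_mul_le {m n : ℕ} (h : 2 * m ≤ n * ((n + 1) / 2)) :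
    m ≤ rainbowTriangleBound n := by
  unfold rainbowTriangleBound
  rcases Nat.even_or_odd' n with ⟨k, rfl | rfl⟩
  · rw [show (2 * k) / 2 = k by omega, show (2 * k + 1) / 2 = k by omega] at *
    rw [mul_assoc] at h
    omega
  · rw [show (2 * k + 1) / 2 = k by omega, show (2 * k + 1 + 1) / 2 = k + 1 by omega] at *
    have : (2 * k + 1) * (k + 1) = 2 * (k * (k + 1)) + (k + 1) := by ring
    omega

namespace SimpleGraph

variable {V κ : Type*} (G : SimpleGraph V) (col : Sym2 V → κ)

def NoRainbowTriangle : Prop :=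
  ¬ ∃ x y z : V, G.Adj x y ∧ G.Adj y z ∧ G.Adj x z ∧
    col s(x, y) ≠ col s(y, z) ∧ col s(y, z) ≠ col s(x, z) ∧ col s(x, y) ≠ col s(x, z)

variable {G col}

lemma NoRainbowTriangle.col_eq (hr : G.NoRainbowTriangle col) {a b c : V} (hab : G.Adj a b)
    (hbc : G.Adj b c) (hac : G.Adj a c) :
    col s(a, b) = col s(b, c) ∨ col s(b, c) = col s(a, c) ∨ col s(a, b) = col s(a, c) := by
  by_contra! h
  exact hr ⟨a, b, c, hab, hbc, hac, h⟩

lemma NoRainbowTriangle.comap {W : Type*} {H : SimpleGraph W} (hr : G.NoRainbowTriangle col)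
    (f : H →g G) : H.NoRainbowTriangle (col ∘ Sym2.map f) := by
  rintro ⟨x, y, z, hxy, hyz, hxz, hne⟩
  exact hr ⟨f x, f y, f z, f.map_adj hxy, f.map_adj hyz, f.map_adj hxz, by simpa using hne⟩

section Finite

variable [Fintype V] [DecidableRel G.Adj] [DecidableEq κ]

variable (G col) in
def colorClass (c : κ) : Finset (Sym2 V) := {e ∈ G.edgeFinset | col e = c}

variable (G col) in
def ColorClassesAtMostTwo : Prop := ∀ c, #(G.colorClass col c) ≤ 2

lemma two_mul_card_le_card_edgeFinset {S : Finset κ}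
    (hS : ∀ c ∈ S, 2 ≤ #(G.colorClass col c)) : 2 * #S ≤ #G.edgeFinset :=
  calc 2 * #S = ∑ _ ∈ S, 2 := by rw [sum_const, smul_eq_mul, mul_comm]
    _ ≤ ∑ c ∈ S, #(G.colorClass col c) := sum_le_sum hS
    _ = #{e ∈ G.edgeFinset | col e ∈ S} := sum_card_fiberwise_eq_card_filter _ _ _
    _ ≤ #G.edgeFinset := card_filter_le _ _

variable (G) in
lemma sum_sum_neighborFinset (f : V → ℕ) :
    ∑ u, ∑ v ∈ G.neighborFinset u, f v = ∑ v, G.degree v * f v := by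
  rw [sum_comm' (t' := univ) (s' := fun v => G.neighborFinset v) (by simp [adj_comm])]
  simp [card_neighborFinset_eq_degree]

lemma ColorClassesAtMostTwo.comap {W : Type*} {H : SimpleGraph W} [Fintype W]
    [DecidableRel H.Adj] (hc : G.ColorClassesAtMostTwo col) (f : H ↪g G) :
    H.ColorClassesAtMostTwo (col ∘ Sym2.map f) := fun c =>
  le_trans (card_le_card_of_injOn (Sym2.map f)
    (fun e he => by
      simp only [colorClass, coe_filter, mem_edgeFinset, Set.mem_ofPred_eq] at he ⊢
      exact ⟨f.toHom.map_mem_edgeSet he.1, he.2⟩)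
    (Sym2.map.injective f.injective).injOn) (hc c)

variable [DecidableEq V]

variable (col) in
/-- When the triangle `abc` is not rainbow, two of its edges have this colour. -/
def repeatedColor (a b c : V) : κ :=
  if col s(a, b) = col s(b, c) then col s(a, b) else col s(a, c)

lemma ColorClassesAtMostTwo.colorClass_eq (hc : G.ColorClassesAtMostTwo col) {x y z : V}
    (hxy : G.Adj x y) (hyz : G.Adj y z) (hxz : x ≠ z) (h : col s(x, y) = col s(y, z)) :
    G.colorClass col (col s(x, y)) = {s(x, y), s(y, z)} := by
  symm
  refine eq_of_subset_of_card_le (fun e he => ?_) ?_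
  · simp only [mem_insert, mem_singleton] at he
    rcases he with rfl | rfl <;> simp [colorClass, hxy, hyz, h]
  · rw [card_pair (by simp [hxz, hxy.ne])]
    exact hc _

lemma exists_colorClass_repeatedColor_eq (hc : G.ColorClassesAtMostTwo col)
    (hr : G.NoRainbowTriangle col) {a b c : V} (hab : G.Adj a b) (hbc : G.Adj b c)
    (hac : G.Adj a c) : ∃ x y z, ({x, y, z} : Finset V) = {a, b, c} ∧ x ≠ z ∧
      G.colorClass col (repeatedColor col a b c) = {s(x, y), s(y, z)} := by
  unfold repeatedColor
  split_ifs with h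
  · exact ⟨a, b, c, rfl, hac.ne, hc.colorClass_eq hab hbc hac.ne h⟩
  rcases hr.col_eq hab hbc hac with h' | h' | h'
  · exact absurd h' h
  · refine ⟨b, c, a, by ext; simp; tauto, hab.ne.symm, ?_⟩
    rw [← h']
    exact hc.colorClass_eq hbc hac.symm hab.ne.symm (by rwa [Sym2.eq_swap (a := c)])
  · refine ⟨b, a, c, by ext; simp; tauto, hbc.ne, ?_⟩
    rw [← h', Sym2.eq_swap]
    exact hc.colorClass_eq hab.symm hac hbc.ne (by rwa [Sym2.eq_swap])

lemma insert_eq_biUnion_colorClass (hc : G.ColorClassesAtMostTwo col)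
    (hr : G.NoRainbowTriangle col) {a b c : V} (hab : G.Adj a b) (hbc : G.Adj b c)
    (hac : G.Adj a c) :
    ({a, b, c} : Finset V) =
      (G.colorClass col (repeatedColor col a b c)).biUnion Sym2.toFinset := by
  obtain ⟨x, y, z, hxyz, -, hclass⟩ := exists_colorClass_repeatedColor_eq hc hr hab hbc hac
  rw [hclass, ← hxyz]
  ext
  simp [Sym2.toFinset_mk_eq]

lemma two_le_card_colorClass_repeatedColor (hc : G.ColorClassesAtMostTwo col)
    (hr : G.NoRainbowTriangle col) {a b c : V} (hab : G.Adj a b) (hbc : G.Adj b c)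
    (hac : G.Adj a c) : 2 ≤ #(G.colorClass col (repeatedColor col a b c)) := by
  obtain ⟨x, y, z, -, hxz, hclass⟩ := exists_colorClass_repeatedColor_eq hc hr hab hbc hac
  rw [hclass, card_pair]
  simp only [ne_eq, Sym2.eq_iff, not_or, not_and]
  exact ⟨fun hxy hyz => hxz (hxy.trans hyz), fun hxz' => absurd hxz' hxz⟩

lemma insert_eq_of_repeatedColor_eq (hc : G.ColorClassesAtMostTwo col)
    (hr : G.NoRainbowTriangle col) {a b c a' b' c' : V} (hab : G.Adj a b) (hbc : G.Adj b c)
    (hac : G.Adj a c) (hab' : G.Adj a' b') (hbc' : G.Adj b' c') (hac' : G.Adj a' c')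
    (h : repeatedColor col a b c = repeatedColor col a' b' c') :
    ({a, b, c} : Finset V) = {a', b', c'} := by
  rw [insert_eq_biUnion_colorClass hc hr hab hbc hac, h,
    insert_eq_biUnion_colorClass hc hr hab' hbc' hac']

variable (G) in
def codegree (u v : V) : ℕ := #(G.neighborFinset u ∩ G.neighborFinset v)

variable (G) in
lemma codegree_comm (u v : V) : G.codegree u v = G.codegree v u := by
  rw [codegree, codegree, inter_comm]

variable (G) in
lemma degree_add_degree_le (u v : V) :
    G.degree u + G.degree v ≤ G.codegree u v + Fintype.card V := by
  rw [← card_neighborFinset_eq_degree, ← card_neighborFinset_eq_degree, codegree,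
    ← card_union_add_card_inter, add_comm]
  grw [card_le_univ (G.neighborFinset u ∪ G.neighborFinset v)]

lemma sum_codegree_le_two_mul_degree (hc : G.ColorClassesAtMostTwo col)
    (hr : G.NoRainbowTriangle col) (x : V) :
    ∑ v ∈ G.neighborFinset x, G.codegree x v ≤ 2 * G.degree x := by
  set T := (G.neighborFinset x).sigma fun v => G.neighborFinset x ∩ G.neighborFinset v
  have hmaps : ∀ p ∈ T,
      repeatedColor col x p.1 p.2 ∈ (G.neighborFinset x).image (col s(x, ·)) := by
    rintro ⟨v, w⟩ hp
    simp only [T, mem_sigma, mem_inter] at hp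
    unfold repeatedColor
    split_ifs
    · exact mem_image_of_mem _ hp.1
    · exact mem_image_of_mem _ hp.2.1
  have hfiber : ∀ c ∈ (G.neighborFinset x).image (col s(x, ·)),
      #{p ∈ T | repeatedColor col x p.1 p.2 = c} ≤ 2 := by
    intro c _
    rcases eq_empty_or_nonempty {p ∈ T | repeatedColor col x p.1 p.2 = c} with
      h | ⟨⟨b, d⟩, hp⟩
    · simp [h]
    refine (card_le_card (t := {⟨b, d⟩, ⟨d, b⟩}) fun ⟨v, w⟩ hq => ?_).trans card_le_two
    simp only [T, mem_filter, mem_sigma, mem_inter, mem_neighborFinset] at hp hq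
    have hvw := insert_eq_of_repeatedColor_eq hc hr hq.1.1 hq.1.2.2 hq.1.2.1 hp.1.1 hp.1.2.2
      hp.1.2.1 (hq.2.trans hp.2.symm)
    have hv : v ∈ ({x, b, d} : Finset V) := hvw ▸ by simp
    have hw : w ∈ ({x, b, d} : Finset V) := hvw ▸ by simp
    have := hq.1.1.ne'
    have := hq.1.2.1.ne'
    have := hq.1.2.2.ne
    simp only [mem_insert, mem_singleton] at hv hw ⊢
    aesop
  calc ∑ v ∈ G.neighborFinset x, G.codegree x v = #T := (card_sigma _ _).symm
    _ ≤ 2 * #((G.neighborFinset x).image (col s(x, ·))) :=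
      card_le_mul_card_image_of_maps_to hmaps 2 hfiber
    _ ≤ 2 * G.degree x := by
      grw [card_image_le, card_neighborFinset_eq_degree]

lemma sum_sum_codegree_le (hc : G.ColorClassesAtMostTwo col) (hr : G.NoRainbowTriangle col) :
    ∑ u, ∑ v ∈ G.neighborFinset u, G.codegree u v ≤ 6 * (#G.edgeFinset / 2) := by
  set T := univ.sigma fun u =>
    (G.neighborFinset u).sigma fun v => G.neighborFinset u ∩ G.neighborFinset v
  set f : (Σ _ : V, Σ _ : V, V) → κ := fun p => repeatedColor col p.1 p.2.1 p.2.2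
  have hfiber : ∀ c ∈ T.image f, #{p ∈ T | f p = c} ≤ 6 := by
    intro c _
    rcases eq_empty_or_nonempty {p ∈ T | f p = c} with h | ⟨⟨a, b, d⟩, hp⟩
    · simp [h]
    refine (card_le_card
      (t := {⟨a, b, d⟩, ⟨a, d, b⟩, ⟨b, a, d⟩, ⟨b, d, a⟩, ⟨d, a, b⟩, ⟨d, b, a⟩})
      fun ⟨u, v, w⟩ hq => ?_).trans card_le_six
    simp only [T, f, mem_filter, mem_sigma, mem_univ, mem_inter, mem_neighborFinset,
      true_and] at hp hq
    have huvw := insert_eq_of_repeatedColor_eq hc hr hq.1.1 hq.1.2.2 hq.1.2.1 hp.1.1 hp.1.2.2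
      hp.1.2.1 (hq.2.trans hp.2.symm)
    have hu : u ∈ ({a, b, d} : Finset V) := huvw ▸ by simp
    have hv : v ∈ ({a, b, d} : Finset V) := huvw ▸ by simp
    have hw : w ∈ ({a, b, d} : Finset V) := huvw ▸ by simp
    have := hq.1.1.ne
    have := hq.1.2.1.ne
    have := hq.1.2.2.ne
    simp only [mem_insert, mem_singleton] at hu hv hw ⊢
    aesop
  have himage : 2 * #(T.image f) ≤ #G.edgeFinset := by
    refine two_mul_card_le_card_edgeFinset (col := col) fun c hc' => ?_
    obtain ⟨⟨u, v, w⟩, hp, rfl⟩ := mem_image.mp hc'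
    simp only [T, mem_sigma, mem_univ, mem_inter, mem_neighborFinset, true_and] at hp
    exact two_le_card_colorClass_repeatedColor hc hr hp.1 hp.2.2 hp.2.1
  calc ∑ u, ∑ v ∈ G.neighborFinset u, G.codegree u v = #T := by
        simp only [T, card_sigma]; rfl
    _ ≤ 6 * #(T.image f) := card_le_mul_card_image T 6 hfiber
    _ ≤ 6 * (#G.edgeFinset / 2) := by omega

variable (G) in
lemma two_mul_sum_degree_sq_le :
    2 * ∑ v, G.degree v ^ 2 ≤
      ∑ u, ∑ v ∈ G.neighborFinset u, G.codegree u v + 2 * #G.edgeFinset * Fintype.card V := by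
  calc 2 * ∑ v, G.degree v ^ 2 = ∑ u, ∑ v ∈ G.neighborFinset u, (G.degree u + G.degree v) := by
        simp only [sum_add_distrib, sum_const, card_neighborFinset_eq_degree, smul_eq_mul,
          sum_sum_neighborFinset]
        rw [two_mul]; simp [sq]
    _ ≤ ∑ u, ∑ v ∈ G.neighborFinset u, (G.codegree u v + Fintype.card V) := by
        exact sum_le_sum fun u _ => sum_le_sum fun v _ => G.degree_add_degree_le u v
    _ = _ := by
        simp only [sum_add_distrib, sum_const, card_neighborFinset_eq_degree, smul_eq_mul,
          ← sum_mul, sum_degrees_eq_twice_card_edges]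

lemma card_edgeFinset_le_ten (hc : G.ColorClassesAtMostTwo col) (hr : G.NoRainbowTriangle col)
    (hV : Fintype.card V = 6) : #G.edgeFinset ≤ 10 := by
  have htangent : ∀ d : ℕ, 7 * d ≤ d ^ 2 + 12 := fun d => by
    rcases le_or_gt d 3 with h | h <;> nlinarith
  have hsq : 14 * #G.edgeFinset ≤ ∑ v, G.degree v ^ 2 + 72 := by
    calc 14 * #G.edgeFinset = ∑ v, 7 * G.degree v := by
          rw [← mul_sum, sum_degrees_eq_twice_card_edges]; ring
      _ ≤ ∑ v, (G.degree v ^ 2 + 12) := sum_le_sum fun d _ => htangent _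
      _ = ∑ v, G.degree v ^ 2 + 72 := by simp [sum_add_distrib, hV]
  have := G.two_mul_sum_degree_sq_le
  have := sum_sum_codegree_le hc hr
  rw [hV] at *
  have hhalf : 6 * (#G.edgeFinset / 2) ≤ 3 * #G.edgeFinset := by omega
  have h13 : 13 * #G.edgeFinset ≤ 144 := by omega
  by_contra! h
  have h11 : #G.edgeFinset = 11 := by omega
  rw [h11] at *
  omega

lemma degree_add_le_card_add_two (hc : G.ColorClassesAtMostTwo col)
    (hr : G.NoRainbowTriangle col) {r : ℕ} (hδ : ∀ v, r ≤ G.degree v) (x : V) :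
    G.degree x + r ≤ Fintype.card V + 2 := by
  rcases (G.degree x).eq_zero_or_pos with h | h
  · have := hδ x; omega
  refine le_of_mul_le_mul_left ?_ h
  calc G.degree x * (G.degree x + r) = ∑ v ∈ G.neighborFinset x, (G.degree x + r) := by
        rw [sum_const, card_neighborFinset_eq_degree, smul_eq_mul]
    _ ≤ ∑ v ∈ G.neighborFinset x, (G.codegree x v + Fintype.card V) := by
        refine sum_le_sum fun v _ => ?_
        have := hδ v
        have := G.degree_add_degree_le x v
        omega
    _ ≤ G.degree x * (Fintype.card V + 2) := by
        rw [sum_add_distrib, sum_const, card_neighborFinset_eq_degree, smul_eq_mul]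
        grw [sum_codegree_le_two_mul_degree hc hr x]
        exact le_of_eq (by ring)

lemma codegree_eq_two_and_degree_eq_of_degree_add_eq (hc : G.ColorClassesAtMostTwo col)
    (hr : G.NoRainbowTriangle col) {r : ℕ} (hδ : ∀ v, r ≤ G.degree v) {x v : V}
    (hx : G.degree x + r = Fintype.card V + 2) (hv : v ∈ G.neighborFinset x) :
    G.codegree x v = 2 ∧ G.degree v = r := by
  have hge : ∀ w ∈ G.neighborFinset x, 2 ≤ G.codegree x w := fun w _ => by
    have := hδ w
    have := G.degree_add_degree_le x w
    omega
  have hsum : ∑ w ∈ G.neighborFinset x, 2 = ∑ w ∈ G.neighborFinset x, G.codegree x w := by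
    refine le_antisymm (sum_le_sum hge) ?_
    grw [sum_codegree_le_two_mul_degree hc hr x]
    simp [card_neighborFinset_eq_degree, mul_comm]
  have hcodeg := ((sum_eq_sum_iff_of_le hge).mp hsum v hv).symm
  have := hδ v
  have := G.degree_add_degree_le x v
  exact ⟨hcodeg, by omega⟩

lemma adj_of_degree_add_eq (hc : G.ColorClassesAtMostTwo col)
    (hr : G.NoRainbowTriangle col) {r : ℕ} (hδ : ∀ v, r ≤ G.degree v) {x v b : V}
    (hx : G.degree x + r = Fintype.card V + 2) (hv : v ∈ G.neighborFinset x)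
    (hb : b ∉ G.neighborFinset x) : G.Adj v b := by
  obtain ⟨hcodeg, hdeg⟩ := codegree_eq_two_and_degree_eq_of_degree_add_eq hc hr hδ hx hv
  have hsub : G.neighborFinset v \ G.neighborFinset x ⊆ (G.neighborFinset x)ᶜ :=
    fun w hw => mem_compl.mpr (mem_sdiff.mp hw).2
  have hcard : #(G.neighborFinset x)ᶜ ≤ #(G.neighborFinset v \ G.neighborFinset x) := by
    have := card_sdiff_add_card_inter (G.neighborFinset v) (G.neighborFinset x)
    rw [codegree, inter_comm] at hcodeg
    rw [card_compl, card_neighborFinset_eq_degree]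
    rw [card_neighborFinset_eq_degree] at this
    omega
  have := (eq_of_subset_of_card_le hsub hcard).symm ▸ mem_compl.mpr hb
  simpa using (mem_sdiff.mp this).1

-- `N(x)ᶜ` is complete to `N(x)`, which induces a 2-regular graph: count the resulting triangles.
lemma mul_card_compl_le_sum_sum_codegree (hc : G.ColorClassesAtMostTwo col)
    (hr : G.NoRainbowTriangle col) {r : ℕ} (hδ : ∀ v, r ≤ G.degree v) {x : V}
    (hx : G.degree x + r = Fintype.card V + 2) :
    6 * (#(G.neighborFinset x) * #(G.neighborFinset x)ᶜ) ≤
      ∑ u, ∑ v ∈ G.neighborFinset u, G.codegree u v := by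
  set C := G.neighborFinset x
  have hadj : ∀ v ∈ C, ∀ b ∈ Cᶜ, G.Adj v b := fun v hv b hb =>
    adj_of_degree_add_eq hc hr hδ hx hv (mem_compl.mp hb)
  have hC2 : ∀ v ∈ C, #(G.neighborFinset v ∩ C) = 2 := fun v hv => by
    rw [inter_comm, ← codegree]
    exact (codegree_eq_two_and_degree_eq_of_degree_add_eq hc hr hδ hx hv).1
  have hcodeg : ∀ v ∈ C, ∀ b ∈ Cᶜ, 2 ≤ G.codegree v b := fun v hv b hb => by
    refine hC2 v hv ▸ card_le_card fun w hw => ?_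
    rw [mem_inter] at hw ⊢
    exact ⟨hw.1, by simpa [adj_comm] using hadj w hw.2 b hb⟩
  have hsumC : ∀ v ∈ C, 4 * #Cᶜ ≤ ∑ w ∈ G.neighborFinset v, G.codegree v w := fun v hv => by
    have hdisj : Disjoint (G.neighborFinset v ∩ C) Cᶜ :=
      disjoint_compl_right.mono_left inter_subset_right
    have hsub : (G.neighborFinset v ∩ C) ∪ Cᶜ ⊆ G.neighborFinset v :=
      union_subset inter_subset_left fun b hb => by simpa using hadj v hv b hb
    refine le_trans ?_ (sum_le_sum_of_subset hsub)
    rw [sum_union hdisj]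
    have h1 : ∑ w ∈ G.neighborFinset v ∩ C, #Cᶜ ≤
        ∑ w ∈ G.neighborFinset v ∩ C, G.codegree v w :=
      sum_le_sum fun w hw => card_le_card fun b hb => by
        rw [mem_inter] at hw ⊢
        simpa using ⟨hadj v hv b hb, hadj w hw.2 b hb⟩
    have h2 : ∑ b ∈ Cᶜ, 2 ≤ ∑ b ∈ Cᶜ, G.codegree v b := sum_le_sum (hcodeg v hv)
    simp only [sum_const, hC2 v hv, smul_eq_mul] at h1 h2
    omega
  have hsumB : ∀ b ∈ Cᶜ, 2 * #C ≤ ∑ v ∈ G.neighborFinset b, G.codegree b v := fun b hb => by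
    have hsub : C ⊆ G.neighborFinset b := fun v hv => by
      simpa [adj_comm] using hadj v hv b hb
    refine le_trans ?_ (sum_le_sum_of_subset hsub)
    calc 2 * #C = ∑ v ∈ C, 2 := by rw [sum_const, smul_eq_mul, mul_comm]
      _ ≤ ∑ v ∈ C, G.codegree b v :=
        sum_le_sum fun v hv => G.codegree_comm v b ▸ hcodeg v hv b hb
  rw [← sum_add_sum_compl C]
  have := card_nsmul_le_sum _ _ _ hsumC
  have := card_nsmul_le_sum _ _ _ hsumB
  simp only [smul_eq_mul] at *
  nlinarith

lemma degree_add_le_card_add_one (hc : G.ColorClassesAtMostTwo col)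
    (hr : G.NoRainbowTriangle col) {r : ℕ} (hr4 : 4 ≤ r) (hδ : ∀ v, r ≤ G.degree v) (x : V) :
    G.degree x + r ≤ Fintype.card V + 1 := by
  by_contra! hlt
  have hx : G.degree x + r = Fintype.card V + 2 :=
    le_antisymm (degree_add_le_card_add_two hc hr hδ x) hlt
  set C := G.neighborFinset x
  have hCcard : #C = G.degree x := card_neighborFinset_eq_degree _ _
  have hBcard : #Cᶜ + 2 = r := by rw [card_compl]; have := card_le_univ C; omega
  have hdeg : 2 * #G.edgeFinset ≤ #C * r + #Cᶜ * #C := by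
    rw [← sum_degrees_eq_twice_card_edges, ← sum_add_sum_compl C]
    gcongr
    · rw [sum_congr rfl fun v hv =>
        (codegree_eq_two_and_degree_eq_of_degree_add_eq hc hr hδ hx hv).2, sum_const, smul_eq_mul]
    · refine sum_le_card_nsmul _ _ _ fun b _ => ?_
      have := degree_add_le_card_add_two hc hr hδ b
      omega
  have hlow : 6 * (#C * #Cᶜ) ≤ _ := mul_card_compl_le_sum_sum_codegree hc hr hδ hx
  have hup := sum_sum_codegree_le hc hr
  have hpos : 0 < #C := by have := hδ x; omega
  rw [← hBcard] at hdeg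
  nlinarith [Nat.mul_le_mul_left #C (show 2 ≤ #Cᶜ by omega),
    Nat.div_mul_le_self #G.edgeFinset 2]

theorem card_edgeFinset_le_rainbowTriangleBound (hc : G.ColorClassesAtMostTwo col)
    (hr : G.NoRainbowTriangle col) (hV : 6 ≤ Fintype.card V) :
    #G.edgeFinset ≤ rainbowTriangleBound (Fintype.card V) := by
  obtain ⟨n, hn⟩ : ∃ n, Fintype.card V = n := ⟨_, rfl⟩
  rw [hn] at hV ⊢
  induction n, hV using Nat.le_induction generalizing V with
  | base => exact card_edgeFinset_le_ten hc hr hn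
  | succ n hn6 ih =>
    by_cases hlow : ∃ x, G.degree x ≤ (n + 1) / 2
    · obtain ⟨x, hx⟩ := hlow
      have hcard : Fintype.card ({x}ᶜ : Set V) = n := by
        rw [Fintype.card_compl_set, hn]
        simp
      have hind := ih (G := G.induce {x}ᶜ) (col := col ∘ Sym2.map (Embedding.induce _))
        (hc.comap _) (hr.comap (Embedding.induce _).toHom) hcard
      have hdel : #G.edgeFinset = #(G.induce {x}ᶜ).edgeFinset + G.degree x := by
        rw [card_edgeFinset_induce_compl_singleton, card_edgeFinset_deleteIncidenceSet,
          Nat.sub_add_cancel (G.degree_le_card_edgeFinset x)]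
      grw [hdel, hind, hx]
      exact rainbowTriangleBound_add_le n
    · push Not at hlow
      have hdeg := degree_add_le_card_add_one hc hr (r := (n + 1) / 2 + 1) (by omega) hlow
      apply le_rainbowTriangleBound_of_two_mul_le
      rw [← sum_degrees_eq_twice_card_edges, ← hn]
      calc ∑ v, G.degree v ≤ ∑ _v : V, (Fintype.card V + 1) / 2 :=
            sum_le_sum fun v _ => by have := hdeg v; omega
        _ = _ := by simp

end Finite

end SimpleGraph

/-- For `n ≥ 6`, every edge-coloured graph on `n` vertices with all colour
classes of size at most 2 and no rainbow triangle has at most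
`⌊n/2⌋⌈n/2⌉ + ⌊⌈n/2⌉/2⌋` edges. -/
theorem stmt7 {V : Type*} [Fintype V] [DecidableEq V] (G : SimpleGraph V)
    [DecidableRel G.Adj] (n : ℕ) (hn : n = Fintype.card V) (hn6 : 6 ≤ n)
    (col : Sym2 V → ℕ)
    (hclass : ∀ i : ℕ, (G.edgeFinset.filter (fun e => col e = i)).card ≤ 2)
    (hrb : ¬ ∃ x y z : V, G.Adj x y ∧ G.Adj y z ∧ G.Adj x z ∧
      col s(x, y) ≠ col s(y, z) ∧ col s(y, z) ≠ col s(x, z) ∧ col s(x, y) ≠ col s(x, z)) :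
    G.edgeFinset.card ≤ (n / 2) * ((n + 1) / 2) + ((n + 1) / 2) / 2 := by
  subst hn
  exact G.card_edgeFinset_le_rainbowTriangleBound hclass hrb hn6
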